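/- arXiv:math-ph/0602058 — 3 statements merged into one kernel-verified Lean document; each statement's English description precedes it below -/
import Mathlib

section
/- Let Φ₀(f) = (1+f)ln(1+f) − f and let f₀, f ≥ 0 with f₀, f ≤ M for some constant M ≥ 0. If E − E₀ ≥ −Φ₀'(f₀) pointwise with equality wherever f₀ > 0, then pointwise Φ₀(f) − Φ₀(f₀) + (E − E₀)(f − f₀) ≥ (1/(2(1+M)))·(f − f₀)². -/
/-!
With `a = 1 + f₀`, `b = 1 + f`, the left-hand side is the gap between `x log x` at `b` and its
tangent line at `a`, plus `(E - E₀ + log a) (f - f₀)`. The latter is nonnegative by the sign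
condition: it vanishes when `f₀ > 0`, and when `f₀ = 0` both factors are nonnegative. The tangent
gap is at least `(b - a)² / (2c)` with `c = 1 + M`, because `(x log x)'' = 1/x ≥ 1/c` on `(0, c]`,
i.e. `x log x - x² / (2c)` is convex there.
-/

open Real Set

theorem ConvexOn.add_mul_sub_le_of_hasDerivAt {S : Set ℝ} {g : ℝ → ℝ} {g' x y : ℝ}
    (hg : ConvexOn ℝ S g) (hx : x ∈ S) (hy : y ∈ S) (hg' : HasDerivAt g g' x) :
    g x + g' * (y - x) ≤ g y := by
  rcases lt_trichotomy x y with hxy | rfl | hyx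
  · have h := hg.le_slope_of_hasDerivAt hx hy hxy hg'
    rw [slope_def_field, le_div_iff₀ (sub_pos.2 hxy)] at h
    linarith
  · simp
  · have h := hg.slope_le_of_hasDerivAt hy hx hyx hg'
    rw [slope_def_field, div_le_iff₀ (sub_pos.2 hyx)] at h
    linarith

theorem hasDerivAt_mul_log_sub_sq_div {x : ℝ} (hx : x ≠ 0) (c : ℝ) :
    HasDerivAt (fun x ↦ x * log x - x ^ 2 / (2 * c)) (log x + 1 - x / c) x := by
  refine ((hasDerivAt_mul_log hx).fun_sub ((hasDerivAt_pow 2 x).div_const (2 * c))).congr_deriv ?_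
  field_simp
  ring

theorem convexOn_mul_log_sub_sq_div (c : ℝ) :
    ConvexOn ℝ (Icc 0 c) (fun x ↦ x * log x - x ^ 2 / (2 * c)) := by
  refine convexOn_of_hasDerivWithinAt2_nonneg (f' := fun x ↦ log x + 1 - x / c)
    (f'' := fun x ↦ x⁻¹ - c⁻¹) (convex_Icc 0 c) (by fun_prop) ?_ ?_ ?_ <;>
    rw [interior_Icc] <;> intro x ⟨hx0, hxc⟩
  · exact (hasDerivAt_mul_log_sub_sq_div hx0.ne' c).hasDerivWithinAt
  · refine HasDerivAt.hasDerivWithinAt ?_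
    simpa using ((hasDerivAt_log hx0.ne').add_const 1).fun_sub ((hasDerivAt_id x).div_const c)
  · exact sub_nonneg.2 (inv_anti₀ hx0 hxc.le)

theorem sq_sub_div_le_mul_log_sub_tangent {a b c : ℝ} (ha : 0 < a) (hac : a ≤ c)
    (hb : 0 ≤ b) (hbc : b ≤ c) :
    (b - a) ^ 2 / (2 * c) ≤ b * log b - a * log a - (log a + 1) * (b - a) := by
  have := (convexOn_mul_log_sub_sq_div c).add_mul_sub_le_of_hasDerivAt
    ⟨ha.le, hac⟩ ⟨hb, hbc⟩ (hasDerivAt_mul_log_sub_sq_div ha.ne' c)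
  linear_combination this

theorem casimir_convexity_estimate_general
    (Φ₀ : ℝ → ℝ) (hΦ₀ : ∀ s : ℝ, Φ₀ s = (1 + s) * Real.log (1 + s) - s)
    (M : ℝ)
    (f₀ f E E₀ : ℝ)
    (hf₀ : 0 ≤ f₀) (hf₀M : f₀ ≤ M) (hf : 0 ≤ f) (hfM : f ≤ M)
    (hineq : E - E₀ ≥ -Real.log (1 + f₀))
    (heq : 0 < f₀ → E - E₀ = -Real.log (1 + f₀)) :
    Φ₀ f - Φ₀ f₀ + (E - E₀) * (f - f₀) ≥ (1 / (2 * (1 + M))) * (f - f₀) ^ 2 := by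
  have htangent := sq_sub_div_le_mul_log_sub_tangent (a := 1 + f₀) (b := 1 + f) (c := 1 + M)
    (by linarith) (by linarith) (by linarith) (by linarith)
  have hsign : 0 ≤ (E - E₀ + log (1 + f₀)) * (f - f₀) := by
    rcases hf₀.eq_or_lt with rfl | hpos
    · exact mul_nonneg (by linarith) (by linarith)
    · simp [heq hpos]
  rw [hΦ₀, hΦ₀]
  linear_combination htangent + hsign

/-- Pointwise convexity estimate: if `E − E₀ ≥ −Φ₀'(f₀)` with equality where `f₀ > 0`, then
`Φ₀(f) − Φ₀(f₀) + (E − E₀)(f − f₀) ≥ (f − f₀)²/(2(1+M))` for `0 ≤ f₀, f ≤ M`. -/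
theorem casimir_convexity_estimate
    (Φ₀ : ℝ → ℝ) (hΦ₀ : ∀ s : ℝ, Φ₀ s = (1 + s) * Real.log (1 + s) - s)
    (M : ℝ) (hM : 0 ≤ M)
    (f₀ f E E₀ : ℝ)
    (hf₀ : 0 ≤ f₀) (hf₀M : f₀ ≤ M) (hf : 0 ≤ f) (hfM : f ≤ M)
    (hineq : E - E₀ ≥ -Real.log (1 + f₀))
    (heq : 0 < f₀ → E - E₀ = -Real.log (1 + f₀)) :
    Φ₀ f - Φ₀ f₀ + (E - E₀) * (f - f₀) ≥ (1 / (2 * (1 + M))) * (f - f₀) ^ 2 :=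
  casimir_convexity_estimate_general Φ₀ hΦ₀ M f₀ f E E₀ hf₀ hf₀M hf hfM hineq heq
end

section
/- Let Ψ : [r₋, r₊] → ℝ be C¹ with Ψ(r₋) = Ψ(r₊) = E, Ψ(r) < E for r₋ < r < r₊, Ψ strictly decreasing on [r₋, r*] and strictly increasing on [r*, r₊] where Ψ attains its minimum at r*. Suppose there exists η > 0 such that |Ψ'(r)| ≥ η √(Ψ(r) − Ψ(r*)) for all r ∈ [r₋, r₊]. Then ∫_{r₋}^{r₊} dr/√(2E − 2Ψ(r)) ≤ (2√2/η) ∫₀¹ ds/√(1−s²) = √2 π/η < ∞. -/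
/-!
On each monotone branch of `Ψ` put `s = √((Ψ r - C) / (E - C))` with `C = Ψ r*`. This is
injective with values in `(0, 1)`, and the gradient condition gives
`|ds/dr| ≥ η / (2 √(E - C))`. Since `2E - 2Ψ r = 2 (E - C) (1 - s²)`, the change of variables
bounds the branch integral by `(√2 / η) ∫₀¹ ds / √(1 - s²) = π / (√2 η)`.
-/

open Real Set MeasureTheory
open scoped ENNReal

theorem lintegral_Ioo_inv_sqrt_one_sub_sq :
    ∫⁻ s in Ioo 0 1, ENNReal.ofReal (1 / √(1 - s ^ 2)) = ENNReal.ofReal (π / 2) := by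
  have hderiv : ∀ s ∈ Ioo (0 : ℝ) 1, HasDerivAt arcsin (1 / √(1 - s ^ 2)) s := fun s hs =>
    hasDerivAt_arcsin (by linarith [hs.1]) hs.2.ne
  have hint : IntegrableOn (fun s : ℝ => 1 / √(1 - s ^ 2)) (Ioc 0 1) :=
    intervalIntegral.integrableOn_deriv_of_nonneg continuous_arcsin.continuousOn hderiv
      fun s _ => by positivity
  rw [Measure.restrict_congr_set Ioo_ae_eq_Ioc,
    ← ofReal_integral_eq_lintegral_ofReal hint (ae_of_all _ fun s => by positivity),
    ← intervalIntegral.integral_of_le zero_le_one,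
    intervalIntegral.integral_eq_sub_of_hasDerivAt_of_le zero_le_one
      continuous_arcsin.continuousOn hderiv
      ((intervalIntegrable_iff_integrableOn_Ioc_of_le zero_le_one).mpr hint),
    arcsin_one, arcsin_zero, sub_zero]

theorem setLIntegral_comp_le_of_le_abs_deriv {s : Set ℝ} {φ φ' : ℝ → ℝ} {c : ℝ}
    (hs : MeasurableSet s) (hφ : ∀ x ∈ s, HasDerivWithinAt φ (φ' x) s x) (hinj : InjOn φ s)
    (hc : 0 < c) (hφ' : ∀ x ∈ s, c ≤ |φ' x|) (g : ℝ → ℝ≥0∞) :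
    ∫⁻ x in s, g (φ x) ≤ ENNReal.ofReal c⁻¹ * ∫⁻ y in φ '' s, g y := by
  rw [lintegral_image_eq_lintegral_abs_deriv_mul hs hφ hinj,
    ← lintegral_const_mul' _ _ ENNReal.ofReal_ne_top]
  refine setLIntegral_mono' hs fun x hx => ?_
  rw [← mul_assoc, ← ENNReal.ofReal_mul (inv_nonneg.mpr hc.le)]
  refine le_mul_of_one_le_left zero_le (ENNReal.one_le_ofReal.mpr ?_)
  rw [inv_mul_eq_div, one_le_div hc]
  exact hφ' x hx

theorem div_le_abs_div_sqrt_div {x k d η : ℝ} (hx : 0 < x) (hk : 0 < k)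
    (hd : η * √x ≤ |d|) : η / (2 * √k) ≤ |d / k / (2 * √(x / k))| := by
  have hsx : 0 < √x := sqrt_pos.mpr hx
  have hsk : 0 < √k := sqrt_pos.mpr hk
  have h : d / k / (2 * √(x / k)) = d / (2 * √k * √x) := by
    rw [sqrt_div' _ hk.le]
    nth_rewrite 1 [← mul_self_sqrt hk.le]
    field_simp
  rw [h, abs_div, abs_of_pos (by positivity : 0 < 2 * √k * √x), le_div_iff₀ (by positivity)]
  calc η / (2 * √k) * (2 * √k * √x) = η * √x := by field_simp
    _ ≤ |d| := hd

theorem setLIntegral_inv_sqrt_two_mul_sub_le {Ψ Ψ' : ℝ → ℝ} {s : Set ℝ} {C E η : ℝ}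
    (hs : MeasurableSet s) (hΨ : ∀ r ∈ s, HasDerivAt Ψ (Ψ' r) r) (hinj : InjOn Ψ s)
    (hCE : C < E) (hη : 0 < η) (hC : ∀ r ∈ s, C < Ψ r) (hE : ∀ r ∈ s, Ψ r < E)
    (hgrad : ∀ r ∈ s, η * √(Ψ r - C) ≤ |Ψ' r|) :
    ∫⁻ r in s, ENNReal.ofReal (1 / √(2 * E - 2 * Ψ r)) ≤ ENNReal.ofReal (π / (√2 * η)) := by
  set k := E - C
  have hk : 0 < k := sub_pos.mpr hCE
  set φ : ℝ → ℝ := fun r => √((Ψ r - C) / k)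
  have hΨC : ∀ r ∈ s, 0 < (Ψ r - C) / k := fun r hr => div_pos (sub_pos.mpr (hC r hr)) hk
  have hφ : ∀ r ∈ s, HasDerivAt φ (Ψ' r / k / (2 * φ r)) r := fun r hr =>
    (((hΨ r hr).sub_const C).div_const k).sqrt (hΨC r hr).ne'
  have hφ_inj : InjOn φ s := fun r₁ h₁ r₂ h₂ h => by
    refine hinj h₁ h₂ ?_
    have := (sqrt_inj (hΨC r₁ h₁).le (hΨC r₂ h₂).le).mp h
    field_simp at this
    linarith
  have hφ_maps : φ '' s ⊆ Ioo 0 1 := by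
    rintro _ ⟨r, hr, rfl⟩
    refine ⟨sqrt_pos.mpr (hΨC r hr), (sqrt_lt' one_pos).mpr ?_⟩
    rw [one_pow, div_lt_one hk]
    linarith [hE r hr]
  have hφ' : ∀ r ∈ s, η / (2 * √k) ≤ |Ψ' r / k / (2 * φ r)| := fun r hr =>
    div_le_abs_div_sqrt_div (sub_pos.mpr (hC r hr)) hk (hgrad r hr)
  have hintegrand : ∀ r ∈ s, ENNReal.ofReal (1 / √(2 * E - 2 * Ψ r)) =
      ENNReal.ofReal (1 / √(2 * k)) * ENNReal.ofReal (1 / √(1 - φ r ^ 2)) := by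
    intro r hr
    have h : 2 * E - 2 * Ψ r = 2 * k * (1 - φ r ^ 2) := by
      rw [sq_sqrt (hΨC r hr).le]
      field_simp
      ring
    rw [← ENNReal.ofReal_mul (by positivity), h, sqrt_mul (by positivity), one_div_mul_one_div]
  calc ∫⁻ r in s, ENNReal.ofReal (1 / √(2 * E - 2 * Ψ r))
      = ENNReal.ofReal (1 / √(2 * k)) * ∫⁻ r in s, ENNReal.ofReal (1 / √(1 - φ r ^ 2)) := by
        rw [setLIntegral_congr_fun hs hintegrand, lintegral_const_mul' _ _ ENNReal.ofReal_ne_top]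
    _ ≤ ENNReal.ofReal (1 / √(2 * k)) * (ENNReal.ofReal (η / (2 * √k))⁻¹ *
          ∫⁻ u in Ioo 0 1, ENNReal.ofReal (1 / √(1 - u ^ 2))) := by
        gcongr
        exact (setLIntegral_comp_le_of_le_abs_deriv hs (fun r hr => (hφ r hr).hasDerivWithinAt)
          hφ_inj (by positivity) hφ' fun u => ENNReal.ofReal (1 / √(1 - u ^ 2))).trans
          (mul_le_mul_right (lintegral_mono_set hφ_maps) _)
    _ = ENNReal.ofReal (π / (√2 * η)) := by
        rw [lintegral_Ioo_inv_sqrt_one_sub_sq, ← ENNReal.ofReal_mul (by positivity),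
          ← ENNReal.ofReal_mul (by positivity)]
        congr 1
        rw [sqrt_mul zero_le_two]
        field_simp

theorem period_integral_bound_general
    (Ψ : ℝ → ℝ) (rm rp rs E η : ℝ)
    (hrm : rm < rs) (hrp : rs < rp) (hη : 0 < η)
    (hC1 : ContDiffOn ℝ 1 Ψ (Icc rm rp))
    (hlt : ∀ r, rm < r → r < rp → Ψ r < E)
    (hdec : StrictAntiOn Ψ (Icc rm rs))
    (hinc : StrictMonoOn Ψ (Icc rs rp))
    (hgrad : ∀ r ∈ Icc rm rp, η * Real.sqrt (Ψ r - Ψ rs) ≤ |deriv Ψ r|) :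
    ∫⁻ r in Ioo rm rp, ENNReal.ofReal (1 / Real.sqrt (2 * E - 2 * Ψ r)) ≤
      ENNReal.ofReal (Real.sqrt 2 * π / η) := by
  have hderiv : ∀ r ∈ Ioo rm rp, HasDerivAt Ψ (deriv Ψ r) r := fun r hr =>
    ((hC1.differentiableOn one_ne_zero r (Ioo_subset_Icc_self hr)).differentiableAt
      (Icc_mem_nhds hr.1 hr.2)).hasDerivAt
  have branch : ∀ a b, rm ≤ a → b ≤ rp → InjOn Ψ (Ioo a b) → (∀ r ∈ Ioo a b, Ψ rs < Ψ r) →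
      ∫⁻ r in Ioo a b, ENNReal.ofReal (1 / √(2 * E - 2 * Ψ r)) ≤
        ENNReal.ofReal (π / (√2 * η)) := fun a b ha hb hinj hmin =>
    setLIntegral_inv_sqrt_two_mul_sub_le measurableSet_Ioo
      (fun r hr => hderiv r ⟨ha.trans_lt hr.1, hr.2.trans_le hb⟩) hinj (hlt rs hrm hrp) hη hmin
      (fun r hr => hlt r (ha.trans_lt hr.1) (hr.2.trans_le hb))
      (fun r hr => hgrad r ⟨ha.trans hr.1.le, hr.2.le.trans hb⟩)
  rw [← Ioo_union_Ico_eq_Ioo hrm hrp.le]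
  refine (lintegral_union_le _ _ _).trans ?_
  rw [Measure.restrict_congr_set Ioo_ae_eq_Ico.symm]
  calc _ ≤ ENNReal.ofReal (π / (√2 * η)) + ENNReal.ofReal (π / (√2 * η)) :=
        add_le_add
          (branch rm rs le_rfl hrp.le (hdec.injOn.mono Ioo_subset_Icc_self)
            fun r hr => hdec ⟨hr.1.le, hr.2.le⟩ ⟨hrm.le, le_rfl⟩ hr.2)
          (branch rs rp hrm.le le_rfl (hinc.injOn.mono Ioo_subset_Icc_self)
            fun r hr => hinc ⟨le_rfl, hrp.le⟩ ⟨hr.1.le, hr.2.le⟩ hr.1)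
    _ = ENNReal.ofReal (√2 * π / η) := by
        rw [← ENNReal.ofReal_add (by positivity) (by positivity)]
        congr 1
        field_simp
        rw [sq_sqrt zero_le_two]
        ring

/-- Bound on the radial period integral: if `Ψ` is `C¹` on `[r₋, r₊]` with
`Ψ(r₋) = Ψ(r₊) = E`, `Ψ < E` inside, strictly decreasing then increasing around its
minimum point `r*`, and `|Ψ'(r)| ≥ η √(Ψ(r) − Ψ(r*))`, then
`∫_{r₋}^{r₊} dr/√(2E − 2Ψ(r)) ≤ √2 π/η < ∞`. -/
theorem period_integral_bound
    (Ψ : ℝ → ℝ) (rm rp rs E η : ℝ)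
    (hrm : rm < rs) (hrp : rs < rp) (hη : 0 < η)
    (hC1 : ContDiffOn ℝ 1 Ψ (Icc rm rp))
    (hEm : Ψ rm = E) (hEp : Ψ rp = E)
    (hlt : ∀ r, rm < r → r < rp → Ψ r < E)
    (hmin : ∀ r ∈ Icc rm rp, Ψ rs ≤ Ψ r)
    (hdec : StrictAntiOn Ψ (Icc rm rs))
    (hinc : StrictMonoOn Ψ (Icc rs rp))
    (hgrad : ∀ r ∈ Icc rm rp, η * Real.sqrt (Ψ r - Ψ rs) ≤ |deriv Ψ r|) :
    ∫⁻ r in Ioo rm rp, ENNReal.ofReal (1 / Real.sqrt (2 * E - 2 * Ψ r)) ≤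
      ENNReal.ofReal (Real.sqrt 2 * π / η) :=
  period_integral_bound_general Ψ rm rp rs E η hrm hrp hη hC1 hlt hdec hinc hgrad
end

section
/- Let f_n = f₀ + σ_n g_n with σ_n > 0, σ_n → 0, f₀, f_n ≥ 0, (g_n) bounded in L²(ℝ⁶), and g_n → g strongly in L²(ℝ⁶). Let Φ : [0,∞)² → ℝ be C² with bounded ∂_f²Φ, and suppose ∂_fΦ(f₀(·), L(·)) is bounded with compact support, and ∫∫ Φ(f_n, L) = ∫∫ Φ(f₀, L) for each n. Then ∫∫ ∂_fΦ(f₀, L) g dv dx = 0. -/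
/-!
Write `f_n = f₀ + σ_n g_n`. Taylor's formula in the first variable of `Φ`, with the bound on
`∂_f²Φ`, gives `|Φ(f_n, L) - Φ(f₀, L) - σ_n ∂_fΦ(f₀, L) g_n| ≤ B σ_n² g_n²` pointwise.
Integrating and using the constraint `∫∫ Φ(f_n, L) = ∫∫ Φ(f₀, L)` yields
`|∫∫ ∂_fΦ(f₀, L) g_n| ≤ B σ_n ∫∫ g_n² → 0`, while `∫∫ ∂_fΦ(f₀, L) g_n → ∫∫ ∂_fΦ(f₀, L) g`
because `∂_fΦ(f₀, L)` is in `L²` and `g_n → g` in `L²`.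
-/

open MeasureTheory Filter Topology

theorem abs_sub_sub_mul_le_of_abs_deriv2_le {f f' f'' : ℝ → ℝ} {s : Set ℝ} (hs : Convex ℝ s)
    (hf : ∀ t ∈ s, HasDerivWithinAt f (f' t) s t)
    (hf' : ∀ t ∈ s, HasDerivWithinAt f' (f'' t) s t)
    {B : ℝ} (hB : ∀ t ∈ s, |f'' t| ≤ B) {a b : ℝ} (ha : a ∈ s) (hb : b ∈ s) :
    |f b - f a - f' a * (b - a)| ≤ B * (b - a) ^ 2 := by
  have hB₀ : 0 ≤ B := (abs_nonneg _).trans (hB a ha)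
  have hab : Set.uIcc a b ⊆ s :=
    (convex_iff_ordConnected.mp hs).uIcc_subset ha hb
  have hf'_lip : ∀ t ∈ Set.uIcc a b, ‖f' t - f' a‖ ≤ B * |b - a| := fun t ht =>
    calc ‖f' t - f' a‖ ≤ B * ‖t - a‖ :=
          hs.norm_image_sub_le_of_norm_hasDerivWithin_le hf' hB ha (hab ht)
      _ ≤ B * |b - a| := mul_le_mul_of_nonneg_left (Set.abs_sub_left_of_mem_uIcc ht) hB₀
  -- mean value inequality for `t ↦ f t - t * f' a`, whose derivative vanishes at `a`
  have hmvt : ‖(f b - b * f' a) - (f a - a * f' a)‖ ≤ B * |b - a| * ‖b - a‖ :=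
    (convex_uIcc a b).norm_image_sub_le_of_norm_hasDerivWithin_le
      (f := fun t => f t - t * f' a)
      (fun t ht => ((hf t (hab ht)).mono hab).sub (hasDerivAt_mul_const (f' a)).hasDerivWithinAt)
      hf'_lip Set.left_mem_uIcc Set.right_mem_uIcc
  calc |f b - f a - f' a * (b - a)| = ‖(f b - b * f' a) - (f a - a * f' a)‖ := by
        rw [Real.norm_eq_abs]; ring_nf
    _ ≤ B * |b - a| * ‖b - a‖ := hmvt
    _ = B * (b - a) ^ 2 := by rw [Real.norm_eq_abs, mul_assoc, ← abs_mul, ← sq, abs_sq]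

section Integral

variable {α : Type*} [MeasurableSpace α] {μ : Measure α}

theorem abs_integral_mul_le_of_integral_eq {u v d h : α → ℝ} {σ K : ℝ} (hσ : 0 < σ)
    (hu : Integrable u μ) (hv : Integrable v μ) (hdh : Integrable (fun x => d x * h x) μ)
    (hh : Integrable (fun x => h x ^ 2) μ) (huv : ∫ x, v x ∂μ = ∫ x, u x ∂μ)
    (hrem : ∀ x, |v x - u x - d x * (σ * h x)| ≤ K * (σ * h x) ^ 2) :
    |∫ x, d x * h x ∂μ| ≤ K * σ * ∫ x, h x ^ 2 ∂μ := by
  have hσdh : (fun x => d x * (σ * h x)) = fun x => σ * (d x * h x) := by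
    funext x; ring
  have hsq : (fun x => K * (σ * h x) ^ 2) = fun x => K * σ ^ 2 * h x ^ 2 := by
    funext x; ring
  have hrem_int : ∫ x, (v x - u x - d x * (σ * h x)) ∂μ = -(σ * ∫ x, d x * h x ∂μ) := by
    rw [integral_sub (f := fun x => v x - u x) (hv.sub hu) (hσdh ▸ hdh.const_mul σ),
      integral_sub hv hu, huv, hσdh, integral_const_mul, sub_self, zero_sub]
  have hσbound : σ * |∫ x, d x * h x ∂μ| ≤ σ * (K * σ * ∫ x, h x ^ 2 ∂μ) :=
    calc σ * |∫ x, d x * h x ∂μ| = ‖∫ x, (v x - u x - d x * (σ * h x)) ∂μ‖ := by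
          rw [hrem_int, Real.norm_eq_abs, abs_neg, abs_mul, abs_of_pos hσ]
      _ ≤ ∫ x, K * (σ * h x) ^ 2 ∂μ :=
          norm_integral_le_of_norm_le (hsq ▸ hh.const_mul (K * σ ^ 2)) (.of_forall hrem)
      _ = σ * (K * σ * ∫ x, h x ^ 2 ∂μ) := by
          rw [hsq, integral_const_mul]; ring
  exact le_of_mul_le_mul_left hσbound hσ

theorem tendsto_integral_mul_of_tendsto_eLpNorm {ι : Type*} {l : Filter ι} {d g : α → ℝ}
    {F : ι → α → ℝ} (hd : MemLp d 2 μ) (hF : ∀ i, MemLp (F i) 2 μ) (hg : MemLp g 2 μ)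
    (hFg : Tendsto (fun i => eLpNorm (F i - g) 2 μ) l (𝓝 0)) :
    Tendsto (fun i => ∫ x, d x * F i x ∂μ) l (𝓝 (∫ x, d x * g x ∂μ)) := by
  refine tendsto_integral_of_L1' _ (hd.integrable_mul hg).aestronglyMeasurable
    (.of_forall fun i => hd.integrable_mul (hF i)) ?_
  have hHolder : ∀ i, eLpNorm ((fun x => d x * F i x) - fun x => d x * g x) 1 μ ≤
      eLpNorm d 2 μ * eLpNorm (F i - g) 2 μ := fun i => by
    have : ((fun x => d x * F i x) - fun x => d x * g x) = d • (F i - g) := by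
      funext x; simp [mul_sub]
    rw [this]
    exact eLpNorm_smul_le_mul_eLpNorm ((hF i).1.sub hg.1) hd.1
  have hlim : Tendsto (fun i => eLpNorm d 2 μ * eLpNorm (F i - g) 2 μ) l (𝓝 0) := by
    simpa using ENNReal.Tendsto.const_mul hFg (Or.inr hd.2.ne)
  exact tendsto_of_tendsto_of_tendsto_of_le_of_le tendsto_const_nhds hlim
    (fun _ => zero_le) hHolder

end Integral

theorem constraint_orthogonality_general
    (f₀ g : (Fin 6 → ℝ) → ℝ) (gs : ℕ → (Fin 6 → ℝ) → ℝ)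
    (σ : ℕ → ℝ) (hσpos : ∀ n, 0 < σ n) (hσ : Tendsto σ atTop (𝓝 0))
    (L : (Fin 6 → ℝ) → ℝ) (hLnn : ∀ x, 0 ≤ L x)
    (hf₀nn : ∀ x, 0 ≤ f₀ x) (hfnnn : ∀ n x, 0 ≤ f₀ x + σ n * gs n x)
    (hgsL2 : ∀ n, MemLp (gs n) 2 (volume : Measure (Fin 6 → ℝ)))
    (hgL2 : MemLp g 2 (volume : Measure (Fin 6 → ℝ)))
    (B2 : ℝ) (hbdd : ∀ n, ∫ x, gs n x ^ 2 ≤ B2)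
    (hconv : Tendsto (fun n => eLpNorm (gs n - g) 2 volume) atTop (𝓝 0))
    (Φ D D2 : ℝ → ℝ → ℝ)
    (hD : ∀ l ≥ (0:ℝ), ∀ s ≥ (0:ℝ), HasDerivAt (fun t => Φ t l) (D s l) s)
    (hD2 : ∀ l ≥ (0:ℝ), ∀ s ≥ (0:ℝ), HasDerivAt (fun t => D t l) (D2 s l) s)
    (B : ℝ) (hD2bd : ∀ l ≥ (0:ℝ), ∀ s ≥ (0:ℝ), |D2 s l| ≤ B)
    (C : ℝ) (hDbd : ∀ x, |D (f₀ x) (L x)| ≤ C)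
    (hDsupp : HasCompactSupport (fun x => D (f₀ x) (L x)))
    (hDmeas : Measurable (fun x => D (f₀ x) (L x)))
    (hint₀ : Integrable (fun x => Φ (f₀ x) (L x)))
    (hintn : ∀ n, Integrable (fun x => Φ (f₀ x + σ n * gs n x) (L x)))
    (hconstraint : ∀ n, ∫ x, Φ (f₀ x + σ n * gs n x) (L x) = ∫ x, Φ (f₀ x) (L x)) :
    ∫ x, D (f₀ x) (L x) * g x = 0 := by
  have hB : 0 ≤ B := (abs_nonneg _).trans (hD2bd 0 le_rfl 0 le_rfl)
  have hDL2 : MemLp (fun x => D (f₀ x) (L x)) 2 volume :=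
    hDsupp.memLp_of_bound hDmeas.aestronglyMeasurable C (.of_forall hDbd)
  have htaylor : ∀ n x, |Φ (f₀ x + σ n * gs n x) (L x) - Φ (f₀ x) (L x) -
      D (f₀ x) (L x) * (σ n * gs n x)| ≤ B * (σ n * gs n x) ^ 2 := fun n x => by
    simpa only [add_sub_cancel_left] using abs_sub_sub_mul_le_of_abs_deriv2_le (convex_Ici 0)
      (fun t ht => (hD (L x) (hLnn x) t ht).hasDerivWithinAt)
      (fun t ht => (hD2 (L x) (hLnn x) t ht).hasDerivWithinAt)
      (hD2bd (L x) (hLnn x)) (hf₀nn x) (hfnnn n x)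
  have hbound : ∀ n, ‖∫ x, D (f₀ x) (L x) * gs n x‖ ≤ B * B2 * σ n := fun n =>
    calc ‖∫ x, D (f₀ x) (L x) * gs n x‖ ≤ B * σ n * ∫ x, gs n x ^ 2 :=
          abs_integral_mul_le_of_integral_eq (hσpos n) hint₀ (hintn n)
            (hDL2.integrable_mul (hgsL2 n)) (hgsL2 n).integrable_sq (hconstraint n) (htaylor n)
      _ ≤ B * B2 * σ n := by
          rw [mul_right_comm B B2]
          exact mul_le_mul_of_nonneg_left (hbdd n) (mul_nonneg hB (hσpos n).le)
  have hzero : Tendsto (fun n => ∫ x, D (f₀ x) (L x) * gs n x) atTop (𝓝 0) :=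
    squeeze_zero_norm hbound (by simpa using hσ.const_mul (B * B2))
  exact tendsto_nhds_unique (tendsto_integral_mul_of_tendsto_eLpNorm hDL2 hgsL2 hgL2 hconv) hzero

/-- Orthogonality of the weak limit to the constraint gradients: if
`f_n = f₀ + σ_n g_n ≥ 0` and `∫∫ Φ(f_n, L) = ∫∫ Φ(f₀, L)` for a Casimir `Φ` with bounded
second `f`-derivative, with `σ_n → 0`, `(g_n)` bounded in `L²` and `g_n → g` in `L²`,
and `∂_fΦ(f₀, L)` bounded with compact support, then `∫∫ ∂_fΦ(f₀, L) g = 0`. -/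
theorem constraint_orthogonality
    (f₀ g : (Fin 6 → ℝ) → ℝ) (gs : ℕ → (Fin 6 → ℝ) → ℝ)
    (σ : ℕ → ℝ) (hσpos : ∀ n, 0 < σ n) (hσ : Tendsto σ atTop (𝓝 0))
    (L : (Fin 6 → ℝ) → ℝ) (hLm : Measurable L) (hLnn : ∀ x, 0 ≤ L x)
    (hf₀nn : ∀ x, 0 ≤ f₀ x) (hfnnn : ∀ n x, 0 ≤ f₀ x + σ n * gs n x)
    (hgsL2 : ∀ n, MemLp (gs n) 2 (volume : Measure (Fin 6 → ℝ)))
    (hgL2 : MemLp g 2 (volume : Measure (Fin 6 → ℝ)))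
    (B2 : ℝ) (hbdd : ∀ n, ∫ x, gs n x ^ 2 ≤ B2)
    (hconv : Tendsto (fun n => eLpNorm (gs n - g) 2 volume) atTop (𝓝 0))
    (Φ D D2 : ℝ → ℝ → ℝ)
    (hΦ : ContDiffOn ℝ 2 (fun p : ℝ × ℝ => Φ p.1 p.2) (Set.Ici 0 ×ˢ Set.Ici 0))
    (hD : ∀ l ≥ (0:ℝ), ∀ s ≥ (0:ℝ), HasDerivAt (fun t => Φ t l) (D s l) s)
    (hD2 : ∀ l ≥ (0:ℝ), ∀ s ≥ (0:ℝ), HasDerivAt (fun t => D t l) (D2 s l) s)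
    (B : ℝ) (hD2bd : ∀ l ≥ (0:ℝ), ∀ s ≥ (0:ℝ), |D2 s l| ≤ B)
    (C : ℝ) (hDbd : ∀ x, |D (f₀ x) (L x)| ≤ C)
    (hDsupp : HasCompactSupport (fun x => D (f₀ x) (L x)))
    (hDmeas : Measurable (fun x => D (f₀ x) (L x)))
    (hint₀ : Integrable (fun x => Φ (f₀ x) (L x)))
    (hintn : ∀ n, Integrable (fun x => Φ (f₀ x + σ n * gs n x) (L x)))
    (hconstraint : ∀ n, ∫ x, Φ (f₀ x + σ n * gs n x) (L x) = ∫ x, Φ (f₀ x) (L x)) :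
    ∫ x, D (f₀ x) (L x) * g x = 0 :=
  constraint_orthogonality_general f₀ g gs σ hσpos hσ L hLnn hf₀nn hfnnn hgsL2 hgL2 B2 hbdd hconv Φ
    D D2 hD hD2 B hD2bd C hDbd hDsupp hDmeas hint₀ hintn hconstraint
end
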